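/- arXiv:0810.2113 — 4 statements merged into one kernel-verified Lean document; each statement's English description precedes it below -/
import Mathlib

section
/- Let A be a positive integer with A ≥ 16 and let V_A(s) = ζ(s)·∑_{n=1}^A μ(n)/n^s − 1. Then for every real t, |V_A(2+it)|² < 1/2. -/
/-! Since `ζ(s) ∑_{n ≥ 1} μ(n) n⁻ˢ = 1` for `Re s > 1`, the quantity inside the norm equals
`-ζ(s) ∑_{n > A} μ(n) n⁻ˢ`. On `Re s = 2` both factors are dominated by tails of `∑ n⁻²`:
`|ζ(s)| ≤ 1 + ∑_{n > 1} n⁻² ≤ 2` and `|∑_{n > A} μ(n) n⁻ˢ| ≤ ∑_{n > A} n⁻² ≤ 1/A`,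
the latter by telescoping `1/n² ≤ 1/(n-1) - 1/n`. Hence the norm is at most `2/A ≤ 1/8`. -/

open Finset LSeries ArithmeticFunction
open scoped LSeries.notation ArithmeticFunction.Moebius

lemma tsum_inv_sq_nat_add_le {A : ℕ} (hA : A ≠ 0) :
    ∑' i : ℕ, (((i + (A + 1) : ℕ) : ℝ) ^ 2)⁻¹ ≤ (A : ℝ)⁻¹ := by
  refine Real.tsum_le_of_sum_range_le (fun _ ↦ by positivity) fun N ↦ ?_
  calc ∑ i ∈ range N, (((i + (A + 1) : ℕ) : ℝ) ^ 2)⁻¹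
      = ∑ n ∈ Ioc A (N + A), ((n : ℝ) ^ 2)⁻¹ := by
        rw [range_eq_Ico, sum_Ico_add' (fun n : ℕ ↦ ((n : ℝ) ^ 2)⁻¹), zero_add, ← add_assoc,
          Ico_add_one_add_one_eq_Ioc]
    _ ≤ (A : ℝ)⁻¹ - ((N + A : ℕ) : ℝ)⁻¹ := sum_Ioc_inv_sq_le_sub hA (by omega)
    _ ≤ (A : ℝ)⁻¹ := sub_le_self _ (by positivity)

lemma norm_term_le_inv_sq {f : ℕ → ℂ} (hf : ∀ n, ‖f n‖ ≤ 1) {s : ℂ} (hs : 2 ≤ s.re) (n : ℕ) :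
    ‖term f s n‖ ≤ ((n : ℝ) ^ 2)⁻¹ := by
  rw [norm_term_eq]
  split_ifs with hn
  · positivity
  · have hn1 : (1 : ℝ) ≤ n := Nat.one_le_cast.mpr (Nat.one_le_iff_ne_zero.mpr hn)
    calc ‖f n‖ / (n : ℝ) ^ s.re ≤ 1 / (n : ℝ) ^ (2 : ℝ) := by
          gcongr
          exact hf n
      _ = ((n : ℝ) ^ 2)⁻¹ := by rw [one_div, Real.rpow_two]

lemma norm_tsum_term_nat_add_le {f : ℕ → ℂ} (hf : ∀ n, ‖f n‖ ≤ 1) {s : ℂ} (hs : 2 ≤ s.re)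
    {A : ℕ} (hA : A ≠ 0) : ‖∑' i, term f s (i + (A + 1))‖ ≤ (A : ℝ)⁻¹ := by
  have hsum : Summable fun i : ℕ ↦ (((i + (A + 1) : ℕ) : ℝ) ^ 2)⁻¹ :=
    (summable_nat_add_iff (f := fun n : ℕ ↦ ((n : ℝ) ^ 2)⁻¹) (A + 1)).mpr
      (Real.summable_nat_pow_inv.mpr one_lt_two)
  calc ‖∑' i, term f s (i + (A + 1))‖
      ≤ ∑' i, (((i + (A + 1) : ℕ) : ℝ) ^ 2)⁻¹ := tsum_of_norm_bounded hsum.hasSum fun i ↦ norm_term_le_inv_sq hf hs _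
    _ ≤ (A : ℝ)⁻¹ := tsum_inv_sq_nat_add_le hA

lemma LSeries_eq_sum_range_add_tsum {f : ℕ → ℂ} {s : ℂ} (hf : LSeriesSummable f s) (k : ℕ) :
    L f s = ∑ n ∈ range k, term f s n + ∑' i, term f s (i + k) :=
  (hf.sum_add_tsum_nat_add k).symm

lemma sum_range_succ_term_eq_sum_Icc (f : ℕ → ℂ) (s : ℂ) (A : ℕ) :
    ∑ n ∈ range (A + 1), term f s n = ∑ n ∈ Icc 1 A, f n / (n : ℂ) ^ s := by
  rw [range_eq_Ico, sum_eq_sum_Ico_succ_bot (by omega : 0 < A + 1), term_zero, zero_add,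
    Ico_add_one_right_eq_Icc]
  exact sum_congr rfl fun n hn ↦ term_of_ne_zero (by simp at hn; omega) f s

lemma norm_riemannZeta_le_two {s : ℂ} (hs : 2 ≤ s.re) : ‖riemannZeta s‖ ≤ 2 := by
  have hs1 : 1 < s.re := by linarith
  rw [← LSeries_one_eq_riemannZeta hs1,
    LSeries_eq_sum_range_add_tsum (LSeriesSummable_one_iff.mpr hs1) 2]
  have htail := norm_tsum_term_nat_add_le (f := 1) (fun _ ↦ by simp) hs one_ne_zero
  have hhead : ∑ n ∈ range 2, term 1 s n = 1 := by simp [sum_range_succ, term_of_ne_zero]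
  calc _ ≤ ‖∑ n ∈ range 2, term 1 s n‖ + ‖∑' i, term 1 s (i + 2)‖ := norm_add_le _ _
    _ ≤ 1 + 1 := by rw [hhead, norm_one]; simpa using htail
    _ = 2 := by norm_num

lemma riemannZeta_mul_sum_moebius_sub_one {s : ℂ} (hs : 1 < s.re) (A : ℕ) :
    riemannZeta s * ∑ n ∈ Icc 1 A, (μ n : ℂ) / (n : ℂ) ^ s - 1
      = -(riemannZeta s * ∑' i, term (↗μ) s (i + (A + 1))) := by
  have hinv : riemannZeta s * L ↗μ s = 1 :=
    LSeries_zeta_eq_riemannZeta hs ▸ LSeries_zeta_mul_Lseries_moebius hs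
  rw [LSeries_eq_sum_range_add_tsum (LSeriesSummable_moebius_iff.mpr hs) (A + 1),
    sum_range_succ_term_eq_sum_Icc] at hinv
  linear_combination hinv

lemma norm_riemannZeta_mul_sum_moebius_sub_one_le {s : ℂ} (hs : 2 ≤ s.re) {A : ℕ} (hA : A ≠ 0) :
    ‖riemannZeta s * ∑ n ∈ Icc 1 A, (μ n : ℂ) / (n : ℂ) ^ s - 1‖ ≤ 2 / A := by
  have htail := norm_tsum_term_nat_add_le (f := ↗μ)
    (fun n ↦ by rw [Complex.norm_intCast]; exact_mod_cast abs_moebius_le_one) hs hA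
  rw [riemannZeta_mul_sum_moebius_sub_one (by linarith) A, norm_neg, norm_mul, div_eq_mul_inv]
  exact mul_le_mul (norm_riemannZeta_le_two hs) htail (norm_nonneg _) zero_le_two

theorem V_A_two_lt_half (A : ℕ) (hA : 16 ≤ A) (t : ℝ) :
    ‖riemannZeta (2 + t * Complex.I) * ∑ n ∈ Finset.Icc 1 A,
      (ArithmeticFunction.moebius n : ℂ) / (n : ℂ) ^ ((2 : ℂ) + t * Complex.I) - 1‖ ^ 2
      < 1 / 2 := by
  have hV := norm_riemannZeta_mul_sum_moebius_sub_one_le (s := 2 + t * Complex.I)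
    (by simp) (by omega : A ≠ 0)
  have h16 : (16 : ℝ) ≤ A := by exact_mod_cast hA
  have hA' : 2 / (A : ℝ) ≤ 1 / 8 := by
    rw [div_le_iff₀ (by positivity)]
    linarith
  exact (pow_le_pow_left₀ (norm_nonneg _) (hV.trans hA') 2).trans_lt (by norm_num)
end

section
/- For every positive integer A, ∑_{m ≤ A} ∑_{n < m} 1/(m^{1/2}·n^{1/2}·log(m/n)) ≤ A·(log A + 4), where the inner sum is over positive integers n < m. -/
open Real Finset

lemma sum_inv_sqrt (m : ℕ) : ∑ n ∈ Finset.Ico 1 (m + 1), (1 : ℝ) / Real.sqrt n ≤ 2 * Real.sqrt m := by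
  induction m with
  | zero => simp
  | succ k ih =>
    rw [Finset.sum_Ico_succ_top (by omega)]
    have hs : (0:ℝ) < Real.sqrt ((k:ℝ) + 1) := Real.sqrt_pos.mpr (by positivity)
    have h2 : Real.sqrt (k:ℝ) ≤ Real.sqrt ((k:ℝ)+1) := Real.sqrt_le_sqrt (by linarith)
    have h3 : Real.sqrt ((k:ℝ)+1)^2 = (k:ℝ)+1 := Real.sq_sqrt (by positivity)
    have h4 : Real.sqrt (k:ℝ)^2 = (k:ℝ) := Real.sq_sqrt (by positivity)
    have h1 : (1:ℝ)/Real.sqrt ((k:ℝ)+1) ≤ 2*(Real.sqrt ((k:ℝ)+1) - Real.sqrt (k:ℝ)) := by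
      rw [div_le_iff₀ hs]; nlinarith
    push_cast
    push_cast at ih
    linarith

lemma sum_inv_sqrt' (m : ℕ) : ∑ n ∈ Finset.Ico 1 m, (1 : ℝ) / Real.sqrt n ≤ 2 * Real.sqrt m := by
  cases m with
  | zero => simp
  | succ k =>
    refine (sum_inv_sqrt k).trans ?_
    have : Real.sqrt (k:ℝ) ≤ Real.sqrt ((k:ℝ)+1) := Real.sqrt_le_sqrt (by linarith)
    push_cast; linarith

lemma key_pointwise (x y : ℝ) (hy : 1 ≤ y) (hxy : y < x) :
    1 / (Real.sqrt x * Real.sqrt y * Real.log (x / y)) ≤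
      1 / (Real.sqrt x * Real.sqrt y) + 1 / (x - y) := by
  set a := Real.sqrt x with ha'
  set b := Real.sqrt y with hb'
  have hy0 : (0:ℝ) < y := by linarith
  have hx0 : (0:ℝ) < x := by linarith
  have hb : 0 < b := Real.sqrt_pos.mpr hy0
  have hab : b < a := Real.sqrt_lt_sqrt (le_of_lt hy0) hxy
  have ha : 0 < a := lt_trans hb hab
  have ha2 : a ^ 2 = x := Real.sq_sqrt (le_of_lt hx0)
  have hb2 : b ^ 2 = y := Real.sq_sqrt (le_of_lt hy0)
  have hL : 2 * (a - b) / a ≤ Real.log (x / y) := by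
    have h1 : Real.log (x / y) = 2 * (Real.log a - Real.log b) := by
      rw [Real.log_div (ne_of_gt hx0) (ne_of_gt hy0), ha', hb',
        Real.log_sqrt (le_of_lt hx0), Real.log_sqrt (le_of_lt hy0)]
      ring
    have h2 : Real.log (b / a) ≤ b / a - 1 := Real.log_le_sub_one_of_pos (by positivity)
    rw [Real.log_div (ne_of_gt hb) (ne_of_gt ha)] at h2
    rw [h1, div_le_iff₀ ha]
    have h3 := mul_le_mul_of_nonneg_right h2 ha.le
    have h4 : (b / a - 1) * a = b - a := by field_simp
    nlinarith [h3, h4]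
  have hLpos : 0 < 2 * (a - b) / a := by
    apply div_pos (by linarith) ha
  have hba : 0 < a - b := sub_pos.mpr hab
  have step1 : 1 / (a * b * Real.log (x / y)) ≤ 1 / (a * b * (2 * (a - b) / a)) := by
    apply one_div_le_one_div_of_le (mul_pos (mul_pos ha hb) hLpos)
    exact mul_le_mul_of_nonneg_left hL (by positivity)
  refine step1.trans ?_
  have heq : a * b * (2 * (a - b) / a) = 2 * b * (a - b) := by
    field_simp
  rw [heq]
  have hxy2 : x - y = (a - b) * (a + b) := by nlinarith
  have p1 : (0:ℝ) < 2 * b * (a - b) := by positivity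
  have p2 : (0:ℝ) < (a - b) * (a + b) := by positivity
  rw [hxy2, div_add_div _ _ (ne_of_gt (mul_pos ha hb)) (ne_of_gt p2),
    div_le_div_iff₀ p1 (mul_pos (mul_pos ha hb) p2)]
  nlinarith [mul_pos hb (sub_pos.mpr hab), mul_pos ha hb]

lemma harm_sum (m : ℕ) : ∑ n ∈ Finset.Ico 1 m, (1:ℝ) / ((m:ℝ) - n) = ∑ k ∈ Finset.Ico 1 m, (1:ℝ) / k := by
  refine Finset.sum_nbij' (fun n => m - n) (fun k => m - k) ?_ ?_ ?_ ?_ ?_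
  · intro n hn; simp only [Finset.mem_Ico] at *; omega
  · intro n hn; simp only [Finset.mem_Ico] at *; omega
  · intro n hn; simp only [Finset.mem_Ico] at hn; show m - (m - n) = n; omega
  · intro n hn; simp only [Finset.mem_Ico] at hn; show m - (m - n) = n; omega
  · intro n hn; simp only [Finset.mem_Ico] at hn
    show (1:ℝ) / ((m:ℝ) - n) = 1 / ((m - n : ℕ) : ℝ)
    congr 1
    rw [Nat.cast_sub (by omega)]

lemma harm_bound (m : ℕ) (hm : 1 ≤ m) :
    ∑ n ∈ Finset.Ico 1 m, (1:ℝ) / ((m:ℝ) - n) ≤ 1 + Real.log (m - 1 : ℕ) := by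
  rw [harm_sum]
  have : ∑ k ∈ Finset.Ico 1 m, (1:ℝ) / k = (harmonic (m-1) : ℝ) := by
    rw [harmonic_eq_sum_Icc]
    push_cast
    rw [show Finset.Ico 1 m = Finset.Icc 1 (m-1) by rw [← Finset.Ico_add_one_right_eq_Icc]; congr 1; omega]
    simp [one_div]
  rw [this]
  exact harmonic_le_one_add_log _

theorem double_sum_bound (A : ℕ) (hA : 0 < A) :
    ∑ m ∈ Finset.Icc 1 A, ∑ n ∈ Finset.Ico 1 m,
        1 / ((m : ℝ) ^ ((1 : ℝ) / 2) * (n : ℝ) ^ ((1 : ℝ) / 2) * Real.log ((m : ℝ) / n))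
      ≤ A * (Real.log A + 4) := by
  have hlogA : 0 ≤ Real.log A := Real.log_nonneg (by exact_mod_cast hA)
  have inner : ∀ m ∈ Finset.Icc 1 A, ∑ n ∈ Finset.Ico 1 m,
      1 / ((m : ℝ) ^ ((1 : ℝ) / 2) * (n : ℝ) ^ ((1 : ℝ) / 2) * Real.log ((m : ℝ) / n))
      ≤ Real.log A + 4 := by
    intro m hm
    simp only [Finset.mem_Icc] at hm
    obtain ⟨hm1, hmA⟩ := hm
    have hmpos : (0:ℝ) < Real.sqrt m := Real.sqrt_pos.mpr (by exact_mod_cast hm1)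
    have step : ∑ n ∈ Finset.Ico 1 m,
        1 / ((m : ℝ) ^ ((1 : ℝ) / 2) * (n : ℝ) ^ ((1 : ℝ) / 2) * Real.log ((m : ℝ) / n))
        ≤ ∑ n ∈ Finset.Ico 1 m, (1 / (Real.sqrt m * Real.sqrt n) + 1 / ((m:ℝ) - n)) := by
      apply Finset.sum_le_sum
      intro n hn
      simp only [Finset.mem_Ico] at hn
      rw [← Real.sqrt_eq_rpow, ← Real.sqrt_eq_rpow]
      exact key_pointwise m n (by exact_mod_cast hn.1) (by exact_mod_cast hn.2)
    refine step.trans ?_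
    rw [Finset.sum_add_distrib]
    have s1 : ∑ n ∈ Finset.Ico 1 m, 1 / (Real.sqrt m * Real.sqrt n) ≤ 2 := by
      have : ∑ n ∈ Finset.Ico 1 m, 1 / (Real.sqrt m * Real.sqrt n)
          = (1 / Real.sqrt m) * ∑ n ∈ Finset.Ico 1 m, (1:ℝ) / Real.sqrt n := by
        rw [Finset.mul_sum]
        apply Finset.sum_congr rfl
        intro n _
        rw [one_div_mul_eq_div, div_div]
        ring_nf
      rw [this]
      calc (1 / Real.sqrt m) * ∑ n ∈ Finset.Ico 1 m, (1:ℝ) / Real.sqrt n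
          ≤ (1 / Real.sqrt m) * (2 * Real.sqrt m) :=
            mul_le_mul_of_nonneg_left (sum_inv_sqrt' m) (by positivity)
        _ = 2 := by field_simp
    have s2 : ∑ n ∈ Finset.Ico 1 m, (1:ℝ) / ((m:ℝ) - n) ≤ 1 + Real.log A := by
      refine (harm_bound m hm1).trans ?_
      have h1 : Real.log ((m-1:ℕ):ℝ) ≤ Real.log A := by
        rcases Nat.eq_zero_or_pos (m-1) with h | h
        · rw [h]; simpa using hlogA
        · apply Real.log_le_log (by exact_mod_cast h)
          exact_mod_cast le_trans (Nat.sub_le m 1) hmA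
      linarith
    linarith
  calc ∑ m ∈ Finset.Icc 1 A, ∑ n ∈ Finset.Ico 1 m,
        1 / ((m : ℝ) ^ ((1 : ℝ) / 2) * (n : ℝ) ^ ((1 : ℝ) / 2) * Real.log ((m : ℝ) / n))
      ≤ ∑ m ∈ Finset.Icc 1 A, (Real.log A + 4) := Finset.sum_le_sum inner
    _ = A * (Real.log A + 4) := by
        rw [Finset.sum_const, Nat.card_Icc, Nat.add_sub_cancel, nsmul_eq_mul]
end

section
/- For real x ≥ 1, ∑_{n ≤ x} d(n) ≤ x·log x + 0.155·x + 4·√x, where d(n) is the number of divisors of n. -/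
/-!
Dirichlet's hyperbola method: with `N = ⌊x⌋` and `D = ⌊√N⌋`, counting the lattice points
`a * b ≤ N` by their coordinate that is at most `D` gives `∑_{n ≤ N} d(n) = 2 ∑_{a ≤ D} ⌊N / a⌋ - D²
≤ 2 x H_D - D²`. The harmonic number is bounded by `H_D ≤ log D + γ + 1 / (2 D)`, since
`H_n - log n - 1 / (2 n)` increases to Euler's constant `γ`; and `γ < 0.5775` because
`H_n - log (n + 1 / 2)` decreases to `γ`, evaluated at `n = 31`. Finally `2 log D ≤ log x`,
`x / D ≤ 2 √x` and `D² ≥ x - 2 √x`.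
-/

open Real Filter Finset

lemma Real.log_le_sub_inv_div_two {y : ℝ} (hy : 1 ≤ y) : log y ≤ (y - y⁻¹) / 2 := by
  simpa [sinh_log (by positivity : 0 < y)] using self_le_sinh_iff.2 (log_nonneg hy)

lemma monotone_harmonic_sub_log_sub_inv_two_mul :
    Monotone fun n : ℕ ↦ (harmonic n : ℝ) - log n - (2 * n : ℝ)⁻¹ := by
  refine monotone_nat_of_le_succ fun n ↦ ?_
  rcases Nat.eq_zero_or_pos n with rfl | hn
  · norm_num
  have hn' : (0 : ℝ) < n := by exact_mod_cast hn
  have key := log_le_sub_inv_div_two (y := (n + 1) / n) (by rw [le_div_iff₀ hn']; linarith)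
  rw [log_div (by positivity) hn'.ne', inv_div] at key
  simp only [harmonic_succ, Rat.cast_add, Rat.cast_inv, Nat.cast_add_one, Rat.cast_natCast]
  have : ((n + 1) / n - n / (n + 1)) / 2 = (2 * n : ℝ)⁻¹ + (2 * (n + 1) : ℝ)⁻¹ := by
    field_simp; ring
  have : (2 * (n + 1) : ℝ)⁻¹ = (n + 1 : ℝ)⁻¹ / 2 := by field_simp
  linarith

lemma antitone_harmonic_sub_log_add_half :
    Antitone fun n : ℕ ↦ (harmonic n : ℝ) - log (n + 1 / 2) := by
  refine antitone_nat_of_succ_le fun n ↦ ?_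
  have key := le_log_one_add_of_nonneg (x := (n + 1 / 2 : ℝ)⁻¹) (by positivity)
  have e1 : 2 * (n + 1 / 2 : ℝ)⁻¹ / ((n + 1 / 2 : ℝ)⁻¹ + 2) = (n + 1 : ℝ)⁻¹ := by
    field_simp; ring
  have e2 : log (1 + (n + 1 / 2 : ℝ)⁻¹) = log (n + 1 + 1 / 2) - log (n + 1 / 2) := by
    rw [← log_div (by positivity) (by positivity)]; congr 1; field_simp; ring
  rw [e1, e2] at key
  simp only [harmonic_succ, Rat.cast_add, Rat.cast_inv, Nat.cast_add_one, Rat.cast_natCast]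
  linarith

lemma harmonic_sub_log_sub_inv_two_mul_le_eulerMascheroniConstant (n : ℕ) :
    (harmonic n : ℝ) - log n - (2 * n : ℝ)⁻¹ ≤ eulerMascheroniConstant := by
  refine monotone_harmonic_sub_log_sub_inv_two_mul.ge_of_tendsto ?_ n
  simpa using tendsto_harmonic_sub_log.sub
    (tendsto_natCast_atTop_atTop.const_mul_atTop two_pos).inv_tendsto_atTop

lemma eulerMascheroniConstant_le_harmonic_sub_log_add_half (n : ℕ) :
    eulerMascheroniConstant ≤ (harmonic n : ℝ) - log (n + 1 / 2) := by
  refine antitone_harmonic_sub_log_add_half.le_of_tendsto ?_ n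
  simpa using tendsto_harmonic_sub_log.sub
    ((tendsto_log_comp_add_sub_log (1 / 2)).comp tendsto_natCast_atTop_atTop)

lemma eulerMascheroniConstant_lt : eulerMascheroniConstant < 0.5775 := by
  have hγ := eulerMascheroniConstant_le_harmonic_sub_log_add_half 31
  -- `31 + 1 / 2 = 2 ^ 5 * (63 / 64)` and `1 - 64 / 63 ≤ log (63 / 64)`
  have hlog : log (31 + 1 / 2 : ℝ) = 5 * log 2 + log (63 / 64) := by
    rw [show (5 : ℝ) = (5 : ℕ) by norm_num, ← log_pow, ← log_mul (by norm_num) (by norm_num)]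
    norm_num
  have h63 := one_sub_inv_le_log_of_pos (x := (63 / 64 : ℝ)) (by norm_num)
  have hH : (harmonic 31 : ℝ) = 290774257297357 / 72201776446800 := by
    norm_num [harmonic_eq_sum_Icc, Finset.sum_Icc_succ_top]
  push_cast at hγ
  rw [hlog, hH] at hγ
  norm_num at h63
  linarith [log_two_gt_d9]

def hyperbolaPoints (N : ℕ) : Finset (ℕ × ℕ) := {p ∈ Icc 1 N ×ˢ Icc 1 N | p.1 * p.2 ≤ N}

lemma mem_hyperbolaPoints {N : ℕ} {p : ℕ × ℕ} :
    p ∈ hyperbolaPoints N ↔ 1 ≤ p.1 ∧ 1 ≤ p.2 ∧ p.1 * p.2 ≤ N := by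
  simp only [hyperbolaPoints, mem_filter, mem_product, mem_Icc]
  constructor
  · tauto
  · rintro ⟨h1, h2, h⟩
    exact ⟨⟨⟨h1, by nlinarith⟩, h2, by nlinarith⟩, h⟩

lemma sum_card_divisors_eq_card_hyperbolaPoints (N : ℕ) :
    ∑ n ∈ Icc 1 N, #n.divisors = #(hyperbolaPoints N) := by
  rw [card_eq_sum_card_fiberwise (f := fun p ↦ p.1 * p.2) (t := Icc 1 N)]
  · refine sum_congr rfl fun n hn ↦ ?_
    rw [mem_Icc] at hn
    have : {p ∈ hyperbolaPoints N | p.1 * p.2 = n} = n.divisorsAntidiagonal := by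
      ext p
      simp only [mem_filter, mem_hyperbolaPoints, Nat.mem_divisorsAntidiagonal]
      constructor
      · rintro ⟨-, rfl⟩; exact ⟨rfl, by omega⟩
      · rintro ⟨rfl, h0⟩
        exact ⟨⟨Nat.pos_of_ne_zero (left_ne_zero_of_mul h0),
          Nat.pos_of_ne_zero (right_ne_zero_of_mul h0), hn.2⟩, rfl⟩
    rw [this, ← Nat.map_div_right_divisors, card_map]
  · intro p hp
    rw [mem_coe, mem_hyperbolaPoints] at hp
    rw [mem_coe, mem_Icc]
    exact ⟨Nat.mul_le_mul hp.1 hp.2.1, hp.2.2⟩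

lemma card_filter_fst_le_hyperbolaPoints (N D : ℕ) :
    #{p ∈ hyperbolaPoints N | p.1 ≤ D} = ∑ a ∈ Icc 1 D, N / a := by
  rw [card_eq_sum_card_fiberwise (f := Prod.fst) (t := Icc 1 D)]
  · refine sum_congr rfl fun a ha ↦ ?_
    rw [mem_Icc] at ha
    have : {p ∈ {p ∈ hyperbolaPoints N | p.1 ≤ D} | p.1 = a} = {a} ×ˢ Icc 1 (N / a) := by
      ext ⟨a', b⟩
      simp only [mem_filter, mem_hyperbolaPoints, mem_product, mem_singleton, mem_Icc,
        Nat.le_div_iff_mul_le ha.1]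
      constructor
      · rintro ⟨⟨⟨-, hb, h⟩, -⟩, rfl⟩; exact ⟨rfl, hb, by linarith⟩
      · rintro ⟨rfl, hb, h⟩; exact ⟨⟨⟨ha.1, hb, by linarith⟩, ha.2⟩, rfl⟩
    simp [this]
  · intro p hp
    simp only [mem_coe, mem_filter, mem_hyperbolaPoints] at hp
    simp [hp.1.1, hp.2]

lemma card_filter_snd_le_hyperbolaPoints (N D : ℕ) :
    #{p ∈ hyperbolaPoints N | p.2 ≤ D} = #{p ∈ hyperbolaPoints N | p.1 ≤ D} := by
  refine card_nbij' Prod.swap Prod.swap ?_ ?_ (fun _ _ ↦ rfl) (fun _ _ ↦ rfl) <;>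
  · intro p
    simp only [coe_filter, Set.mem_ofPred_eq, mem_hyperbolaPoints, Prod.fst_swap, Prod.snd_swap]
    intro h
    exact ⟨⟨h.1.2.1, h.1.1, by linarith [h.1.2.2, mul_comm p.1 p.2]⟩, h.2⟩

theorem sum_card_divisors_add_sqrt_mul_sqrt (N : ℕ) :
    ∑ n ∈ Icc 1 N, #n.divisors + N.sqrt * N.sqrt = 2 * ∑ a ∈ Icc 1 N.sqrt, N / a := by
  set D := N.sqrt
  have hunion : {p ∈ hyperbolaPoints N | p.1 ≤ D} ∪ {p ∈ hyperbolaPoints N | p.2 ≤ D} =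
      hyperbolaPoints N := by
    rw [← filter_or, filter_true_of_mem]
    intro p hp
    rw [mem_hyperbolaPoints] at hp
    by_contra! h
    have := Nat.lt_succ_sqrt N
    nlinarith
  have hinter : {p ∈ hyperbolaPoints N | p.1 ≤ D} ∩ {p ∈ hyperbolaPoints N | p.2 ≤ D} =
      Icc 1 D ×ˢ Icc 1 D := by
    ext p
    simp only [← filter_and, mem_filter, mem_hyperbolaPoints, mem_product, mem_Icc]
    have := Nat.sqrt_le N
    constructor
    · tauto
    · rintro ⟨⟨h1, h2⟩, h3, h4⟩
      exact ⟨⟨h1, h3, by nlinarith⟩, h2, h4⟩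
  have := card_union_add_card_inter {p ∈ hyperbolaPoints N | p.1 ≤ D}
    {p ∈ hyperbolaPoints N | p.2 ≤ D}
  rw [hunion, hinter, card_product, Nat.card_Icc, Nat.add_sub_cancel,
    card_filter_snd_le_hyperbolaPoints, card_filter_fst_le_hyperbolaPoints,
    ← sum_card_divisors_eq_card_hyperbolaPoints] at this
  omega

lemma nat_sqrt_floor_le_sqrt {x : ℝ} (hx : 0 ≤ x) : (⌊x⌋₊.sqrt : ℝ) ≤ √x := by
  rw [le_sqrt (by positivity) hx, ← Nat.cast_pow, sq]
  exact (Nat.cast_le.2 (Nat.sqrt_le _)).trans (Nat.floor_le hx)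

lemma sqrt_lt_nat_sqrt_floor_add_one (x : ℝ) : √x < ⌊x⌋₊.sqrt + 1 := by
  rw [sqrt_lt' (by positivity)]
  calc x < ⌊x⌋₊ + 1 := Nat.lt_floor_add_one x
    _ ≤ (⌊x⌋₊.sqrt + 1) * (⌊x⌋₊.sqrt + 1) := by exact_mod_cast Nat.lt_succ_sqrt _
    _ = _ := by ring

lemma two_mul_mul_log_add_sub_mul_self_le {x c : ℝ} {D : ℕ} (hD : 1 ≤ D) (hDx : (D : ℝ) ≤ √x)
    (hxD : √x < D + 1) :
    2 * x * (log D + c + (2 * D : ℝ)⁻¹) - D * D ≤ x * log x + (2 * c - 1) * x + 4 * √x := by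
  have hD1 : (1 : ℝ) ≤ D := by exact_mod_cast hD
  have hx : 0 < x := sqrt_pos.1 (by linarith)
  have hs : √x * √x = x := mul_self_sqrt hx.le
  have hlog : 2 * log D ≤ log x := by
    have := log_le_log (by positivity) hDx
    rw [log_sqrt hx.le] at this
    linarith
  have hinv : x * (D : ℝ)⁻¹ ≤ 2 * √x := by
    rw [← div_eq_mul_inv, div_le_iff₀ (by positivity)]
    nlinarith
  have hsq : x - 2 * √x ≤ D * D := by nlinarith
  have : 2 * x * (2 * D : ℝ)⁻¹ = x * (D : ℝ)⁻¹ := by field_simp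
  nlinarith

theorem divisor_sum_bound (x : ℝ) (hx : 1 ≤ x) :
    ∑ n ∈ Finset.Icc 1 ⌊x⌋₊, (n.divisors.card : ℝ)
      ≤ x * Real.log x + 0.155 * x + 4 * Real.sqrt x := by
  set N := ⌊x⌋₊
  set D := N.sqrt
  have hD : 1 ≤ D := Nat.le_sqrt.2 (Nat.le_floor (by simpa using hx))
  have hyperbola : ∑ n ∈ Icc 1 N, (#n.divisors : ℝ) + D * D =
      2 * ∑ a ∈ Icc 1 D, ((N / a : ℕ) : ℝ) := by
    exact_mod_cast sum_card_divisors_add_sqrt_mul_sqrt N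
  have hfloor : ∑ a ∈ Icc 1 D, ((N / a : ℕ) : ℝ) ≤ x * harmonic D := by
    rw [harmonic_eq_sum_Icc, Rat.cast_sum, mul_sum]
    refine sum_le_sum fun a _ ↦ ?_
    calc ((N / a : ℕ) : ℝ) ≤ N / a := Nat.cast_div_le
      _ ≤ x / a := by gcongr; exact Nat.floor_le (by linarith)
      _ = x * ((a : ℚ)⁻¹ : ℚ) := by push_cast; ring
  have hharmonic := harmonic_sub_log_sub_inv_two_mul_le_eulerMascheroniConstant D
  calc ∑ n ∈ Icc 1 N, (#n.divisors : ℝ)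
      = 2 * ∑ a ∈ Icc 1 D, ((N / a : ℕ) : ℝ) - D * D := by linarith
    _ ≤ 2 * x * (log D + eulerMascheroniConstant + (2 * D : ℝ)⁻¹) - D * D := by nlinarith
    _ ≤ x * log x + (2 * eulerMascheroniConstant - 1) * x + 4 * √x :=
      two_mul_mul_log_add_sub_mul_self_le hD (nat_sqrt_floor_le_sqrt (by linarith))
        (sqrt_lt_nat_sqrt_floor_add_one x)
    _ ≤ x * log x + 0.155 * x + 4 * √x := by nlinarith [eulerMascheroniConstant_lt]
end

section
/- Let τ ≥ e and 1/2 ≤ σ ≤ 2. For s = σ + it with t > 0, (1/2)·e^{t/(2τ)} < |cos(s/(2τ))| < e^{t/(2τ)}. -/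
/-!
Writing `z = x + iy`, one has `|cos z|² = cos² x + sinh² y`. Since `cos² x ≤ 1`, this is at most
`cosh² y`, and `cosh y < e^y` for `y > 0`. Expanding `sinh² y = (e^{2y} - 2 + e^{-2y}) / 4` gives
`|cos z|² - e^{2y}/4 = cos² x - 1/2 + e^{-2y}/4`, which is positive once `|x| ≤ π/4`; here
`x = σ/(2τ) ≤ 1/e < π/4`.
-/

open Real

theorem Complex.normSq_cos (z : ℂ) :
    Complex.normSq (Complex.cos z) = Real.cos z.re ^ 2 + Real.sinh z.im ^ 2 := by
  conv_lhs => rw [← Complex.re_add_im z]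
  rw [Complex.cos_add_mul_I, ← Complex.ofReal_cos, ← Complex.ofReal_cosh, ← Complex.ofReal_sin,
    ← Complex.ofReal_sinh, Complex.normSq_apply]
  simp only [Complex.sub_re, Complex.sub_im, Complex.mul_re, Complex.mul_im, Complex.ofReal_re,
    Complex.ofReal_im, Complex.I_re, Complex.I_im]
  nlinarith [Real.sin_sq_add_cos_sq z.re, Real.cosh_sq z.im]

theorem Complex.norm_cos_le_cosh_im (z : ℂ) : ‖Complex.cos z‖ ≤ Real.cosh z.im := by
  rw [← sq_le_sq₀ (norm_nonneg _) (Real.cosh_pos _).le, ← Complex.normSq_eq_norm_sq,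
    Complex.normSq_cos, Real.cosh_sq']
  gcongr
  exact Real.cos_sq_le_one _

theorem Real.cosh_lt_exp {x : ℝ} (hx : 0 < x) : cosh x < exp x := by
  rw [cosh_eq]
  linarith [exp_lt_exp.2 (neg_lt_self hx)]

theorem Real.half_le_cos_sq {x : ℝ} (hx : |x| ≤ π / 4) : 1 / 2 ≤ cos x ^ 2 := by
  have : 0 ≤ cos (2 * x) := cos_nonneg_of_mem_Icc <| by
    constructor <;> linarith [abs_le.1 hx]
  rw [cos_sq]
  linarith

theorem Complex.exp_im_div_two_lt_norm_cos {z : ℂ} (hz : |z.re| ≤ π / 4) :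
    Real.exp z.im / 2 < ‖Complex.cos z‖ := by
  rw [← sq_lt_sq₀ (by positivity) (norm_nonneg _), ← Complex.normSq_eq_norm_sq,
    Complex.normSq_cos, Real.sinh_eq]
  have hprod : Real.exp z.im * Real.exp (-z.im) = 1 := by
    rw [← Real.exp_add, add_neg_cancel, Real.exp_zero]
  nlinarith [half_le_cos_sq hz, Real.exp_pos (-z.im)]

theorem abs_cos_bounds (τ σ t : ℝ) (hτ : Real.exp 1 ≤ τ) (hσ1 : 1 / 2 ≤ σ) (hσ2 : σ ≤ 2)
    (ht : 0 < t) :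
    1 / 2 * Real.exp (t / (2 * τ)) < ‖Complex.cos ((σ + t * Complex.I) / (2 * τ))‖
      ∧ ‖Complex.cos ((σ + t * Complex.I) / (2 * τ))‖ < Real.exp (t / (2 * τ)) := by
  have hτ0 : 0 < τ := (exp_pos 1).trans_le hτ
  set z : ℂ := (σ + t * Complex.I) / (2 * τ)
  have hz : z = (σ + t * Complex.I) / ((2 * τ : ℝ) : ℂ) := by push_cast; rfl
  have hre : z.re = σ / (2 * τ) := by rw [hz, Complex.div_ofReal_re]; simp
  have him : z.im = t / (2 * τ) := by rw [hz, Complex.div_ofReal_im]; simp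
  have hre_le : |z.re| ≤ π / 4 := by
    rw [hre, abs_of_pos (by positivity), div_le_iff₀ (by positivity)]
    nlinarith [exp_one_gt_d9, pi_gt_three]
  rw [← him]
  constructor
  · linarith [Complex.exp_im_div_two_lt_norm_cos hre_le]
  · exact (Complex.norm_cos_le_cosh_im z).trans_lt (cosh_lt_exp (by rw [him]; positivity))
end
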